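/- arXiv:0911.4265 — 5 statements merged into one kernel-verified Lean document; each statement's English description precedes it below -/
import Mathlib

section
/- Let p be an odd prime. For every natural number n, the n-th group cohomology of the cyclic group of order p with coefficients in the trivial representation on ℤ/pℤ is isomorphic as a ℤ/pℤ-module to ℤ/pℤ (in particular the cohomology of ℤ/pℤ with ℤ/pℤ-coefficients is periodic with period 2 and nonzero in every degree). -/
/-!
Cohomology of a finite cyclic group `G = ⟨g⟩` is computed by the periodic complex
`A --(g - 1)--> A --N--> A --(g - 1)--> A --N--> ⋯`. For the trivial module `A = ℤ/p` and
`|G| = p` both differentials vanish (`N` is multiplication by `p`), so every `Hⁿ` is `A` itself.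
-/

open CategoryTheory

universe u

namespace Rep

variable {k G V : Type u} [CommRing k] [CommGroup G] [AddCommGroup V] [Module k V]

lemma applyAsHom_trivial_sub_id_eq_zero (g : G) : applyAsHom (trivial k G V) g - 𝟙 _ = 0 := by
  ext x
  exact sub_self x

lemma norm_trivial_eq_zero [Fintype G] (hV : ∀ v : V, Fintype.card G • v = 0) :
    (trivial k G V).norm = 0 := by
  apply Rep.hom_ext
  ext x
  show (Representation.trivial k G V).norm x = 0
  simp [Representation.norm, hV]

theorem FiniteCyclicGroup.nonempty_groupCohomology_trivial_iso [Fintype G] (g : G)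
    (hg : ∀ x, x ∈ Subgroup.zpowers g) (hV : ∀ v : V, Fintype.card G • v = 0) (i : ℕ) :
    Nonempty (groupCohomology (trivial k G V) i ≅ ModuleCat.of k V) := by
  rcases Nat.even_or_odd i with hi | hi
  · rcases eq_or_ne i 0 with rfl | hi0
    · exact ⟨groupCohomology.H0IsoOfIsTrivial _⟩
    · have : NeZero i := ⟨hi0⟩
      exact ⟨groupCohomologyIsoEven _ g hg i hi ≪≫ (ShortComplex.HomologyData.ofZeros _
        (by simp [norm_trivial_eq_zero hV])
        (by simp [applyAsHom_trivial_sub_id_eq_zero])).left.homologyIso⟩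
  · exact ⟨groupCohomologyIsoOdd _ g hg i hi ≪≫ (ShortComplex.HomologyData.ofZeros _
      (by simp [applyAsHom_trivial_sub_id_eq_zero])
      (by simp [norm_trivial_eq_zero hV])).left.homologyIso⟩

end Rep

theorem cohomology_of_cyclic_group_mod_p_general (p : ℕ) (hp : p.Prime) (n : ℕ) :
    Nonempty
      ((groupCohomology (Rep.trivial (ZMod p) (Multiplicative (ZMod p)) (ZMod p)) n)
          ≃ₗ[ZMod p] ZMod p) := by
  have : NeZero p := ⟨hp.ne_zero⟩
  obtain ⟨g, hg⟩ := IsCyclic.exists_generator (α := Multiplicative (ZMod p))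
  obtain ⟨e⟩ := Rep.FiniteCyclicGroup.nonempty_groupCohomology_trivial_iso (k := ZMod p) g hg
    (fun v : ZMod p => by simp) n
  exact ⟨e.toLinearEquiv⟩

/-- Let `p` be an odd prime.  For every natural number `n`, the `n`-th group cohomology
of the cyclic group `ℤ/pℤ` with coefficients in the trivial representation on `ℤ/pℤ` is
isomorphic, as a `ℤ/pℤ`-module, to `ℤ/pℤ`; in particular the cohomology of `ℤ/pℤ` with
`ℤ/pℤ`-coefficients is periodic with period `2` and nonzero in every degree. -/
theorem cohomology_of_cyclic_group_mod_p (p : ℕ) (hp : p.Prime) (hodd : Odd p) (n : ℕ) :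
    Nonempty
      ((groupCohomology (Rep.trivial (ZMod p) (Multiplicative (ZMod p)) (ZMod p)) n)
          ≃ₗ[ZMod p] ZMod p) :=
  cohomology_of_cyclic_group_mod_p_general p hp n
end

section
/- Let λ > 0 and 0 < δ < 1/2 be real numbers. Let a : ℝ → ℝ be continuous and monotone nondecreasing on [δ, 1/2), with a(r) > 0 for every r ∈ (δ, 1/2). Suppose there is a finite set F ⊂ (δ, 1/2) such that for every r ∈ (δ, 1/2) \ F, the function a is differentiable at r and satisfies a(r) ≤ λ · (a′(r))². Then a(r) ≥ (r − δ)²/(4λ) for every r ∈ (δ, 1/2). -/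
/-!
Since `a` is nondecreasing, `a′ ≥ 0`, so `a ≤ λ (a′)²` gives `(√a)′ = a′ / (2√a) ≥ 1 / (2√λ)`
off `F`. The mean value theorem, applied on each of the finitely many intervals cut out by `F`
and glued by continuity, yields `√(a r) ≥ √(a δ) + (r - δ) / (2√λ) ≥ (r - δ) / (2√λ)`.
-/

open Set Real

theorem monotoneOn_Icc_of_deriv_nonneg_off_finite {S : Set ℝ} (hS : S.Finite) {f : ℝ → ℝ}
    {u v : ℝ} (hf : ContinuousOn f (Icc u v)) (hf' : ∀ x ∈ Ioo u v \ S, DifferentiableAt ℝ f x)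
    (hf'_nonneg : ∀ x ∈ Ioo u v \ S, 0 ≤ deriv f x) : MonotoneOn f (Icc u v) := by
  induction S, hS using Set.Finite.induction_on generalizing u v with
  | empty =>
    refine monotoneOn_of_deriv_nonneg (convex_Icc u v) hf ?_ ?_ <;> rw [interior_Icc]
    · exact fun x hx => (hf' x ⟨hx, notMem_empty x⟩).differentiableWithinAt
    · exact fun x hx => hf'_nonneg x ⟨hx, notMem_empty x⟩
  | @insert p S _ _ ih =>
    by_cases hp : p ∈ Ioo u v
    · have hleft : Ioo u p \ S ⊆ Ioo u v \ insert p S := fun x ⟨hx, hxS⟩ =>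
        ⟨Ioo_subset_Ioo_right hp.2.le hx, by simp [hx.2.ne, hxS]⟩
      have hright : Ioo p v \ S ⊆ Ioo u v \ insert p S := fun x ⟨hx, hxS⟩ =>
        ⟨Ioo_subset_Ioo_left hp.1.le hx, by simp [hx.1.ne', hxS]⟩
      rw [← Icc_union_Icc_eq_Icc hp.1.le hp.2.le]
      exact MonotoneOn.union_right
        (ih (hf.mono (Icc_subset_Icc_right hp.2.le)) (fun x hx => hf' x (hleft hx))
          (fun x hx => hf'_nonneg x (hleft hx)))
        (ih (hf.mono (Icc_subset_Icc_left hp.1.le)) (fun x hx => hf' x (hright hx))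
          (fun x hx => hf'_nonneg x (hright hx)))
        (isGreatest_Icc hp.1.le) (isLeast_Icc hp.2.le)
    · have hsub : Ioo u v \ S ⊆ Ioo u v \ insert p S := fun x ⟨hx, hxS⟩ =>
        ⟨hx, by rintro (rfl | h); exacts [hp hx, hxS h]⟩
      exact ih hf (fun x hx => hf' x (hsub hx)) (fun x hx => hf'_nonneg x (hsub hx))

theorem mul_sub_le_sub_of_le_deriv_off_finite {S : Set ℝ} (hS : S.Finite) {f : ℝ → ℝ}
    {u v C : ℝ} (huv : u ≤ v) (hf : ContinuousOn f (Icc u v))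
    (hf' : ∀ x ∈ Ioo u v \ S, DifferentiableAt ℝ f x) (hC : ∀ x ∈ Ioo u v \ S, C ≤ deriv f x) :
    C * (v - u) ≤ f v - f u := by
  have hmono : MonotoneOn (fun x => f x - C * x) (Icc u v) := by
    refine monotoneOn_Icc_of_deriv_nonneg_off_finite hS
      (hf.sub (continuousOn_const.mul continuousOn_id))
      (fun x hx => (hf' x hx).sub (differentiableAt_id.const_mul C)) fun x hx => ?_
    rw [((hf' x hx).hasDerivAt.fun_sub ((hasDerivAt_id' x).const_mul C)).deriv, mul_one, sub_nonneg]
    exact hC x hx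
  have := hmono (left_mem_Icc.2 huv) (right_mem_Icc.2 huv) huv
  dsimp only at this
  linarith

theorem one_div_two_mul_sqrt_le_deriv_sqrt_of_le_mul_sq {a : ℝ → ℝ} {x lam : ℝ} (hlam : 0 < lam)
    (hax : 0 < a x) (ha : DifferentiableAt ℝ a x) (ha'_nonneg : 0 ≤ deriv a x)
    (hineq : a x ≤ lam * deriv a x ^ 2) : 1 / (2 * √lam) ≤ deriv (fun y => √(a y)) x := by
  have hsqrt : √(a x) ≤ √lam * deriv a x :=
    calc √(a x) ≤ √(lam * deriv a x ^ 2) := sqrt_le_sqrt hineq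
      _ = √lam * deriv a x := by rw [sqrt_mul hlam.le, sqrt_sq ha'_nonneg]
  rw [(ha.hasDerivAt.sqrt hax.ne').deriv, div_le_div_iff₀ (by positivity) (by positivity)]
  linarith

theorem ball_growth_differential_inequality_general (lam δ : ℝ) (hlam : 0 < lam)
    (a : ℝ → ℝ)
    (hcont : ContinuousOn a (Set.Ico δ (1 / 2)))
    (hmono : MonotoneOn a (Set.Ico δ (1 / 2)))
    (hpos : ∀ r ∈ Set.Ioo δ (1 / 2), 0 < a r)
    (F : Finset ℝ)
    (hdiff : ∀ r ∈ Set.Ioo δ (1 / 2) \ (F : Set ℝ),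
      DifferentiableAt ℝ a r ∧ a r ≤ lam * (deriv a r) ^ 2) :
    ∀ r ∈ Set.Ioo δ (1 / 2), (r - δ) ^ 2 / (4 * lam) ≤ a r := by
  intro r hr
  have hsub : Ioo δ r \ (F : Set ℝ) ⊆ Ioo δ (1 / 2) \ F :=
    sdiff_subset_sdiff_left (Ioo_subset_Ioo_right hr.2.le)
  have ha'_nonneg : ∀ x ∈ Ioo δ (1 / 2), 0 ≤ deriv a x := fun x hx => by
    rw [← derivWithin_of_mem_nhds (Ico_mem_nhds hx.1 hx.2)]
    exact hmono.derivWithin_nonneg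
  have hgrowth : 1 / (2 * √lam) * (r - δ) ≤ √(a r) - √(a δ) :=
    mul_sub_le_sub_of_le_deriv_off_finite F.finite_toSet hr.1.le
      (continuous_sqrt.comp_continuousOn (hcont.mono (Icc_subset_Ico_right hr.2)))
      (fun x hx => (hdiff x (hsub hx)).1.sqrt (hpos x (hsub hx).1).ne')
      (fun x hx => one_div_two_mul_sqrt_le_deriv_sqrt_of_le_mul_sq hlam (hpos x (hsub hx).1)
        (hdiff x (hsub hx)).1 (ha'_nonneg x (hsub hx).1) (hdiff x (hsub hx)).2)
  have hr_δ : 0 ≤ r - δ := sub_nonneg.2 hr.1.le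
  calc (r - δ) ^ 2 / (4 * lam) = (1 / (2 * √lam) * (r - δ)) ^ 2 := by
        rw [mul_pow, div_pow, mul_pow, sq_sqrt hlam.le]; ring
    _ ≤ √(a r) ^ 2 :=
        pow_le_pow_left₀ (by positivity) (hgrowth.trans (sub_le_self _ (sqrt_nonneg _))) 2
    _ = a r := sq_sqrt (hpos r hr).le

/-- Let `lam > 0` and `0 < δ < 1/2` be real numbers.  Let `a : ℝ → ℝ` be continuous and
monotone nondecreasing on `[δ, 1/2)`, with `a r > 0` for every `r ∈ (δ, 1/2)`.  Suppose
there is a finite set `F ⊂ (δ, 1/2)` such that for every `r ∈ (δ, 1/2) \ F` the function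
`a` is differentiable at `r` and satisfies `a r ≤ lam * (a′ r)²`.  Then
`a r ≥ (r − δ)² / (4 lam)` for every `r ∈ (δ, 1/2)`. -/
theorem ball_growth_differential_inequality (lam δ : ℝ) (hlam : 0 < lam)
    (hδ0 : 0 < δ) (hδ : δ < 1 / 2) (a : ℝ → ℝ)
    (hcont : ContinuousOn a (Set.Ico δ (1 / 2)))
    (hmono : MonotoneOn a (Set.Ico δ (1 / 2)))
    (hpos : ∀ r ∈ Set.Ioo δ (1 / 2), 0 < a r)
    (F : Finset ℝ) (hF : (F : Set ℝ) ⊆ Set.Ioo δ (1 / 2))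
    (hdiff : ∀ r ∈ Set.Ioo δ (1 / 2) \ (F : Set ℝ),
      DifferentiableAt ℝ a r ∧ a r ≤ lam * (deriv a r) ^ 2) :
    ∀ r ∈ Set.Ioo δ (1 / 2), (r - δ) ^ 2 / (4 * lam) ≤ a r :=
  ball_growth_differential_inequality_general lam δ hlam a hcont hmono hpos F hdiff
end

section
/- Let λ > 0 and 0 < δ < 1/2 be real numbers. Let ℓ : ℝ → ℝ be a nonnegative function, integrable on [0, 1/2], and define a(r) = ∫₀^r ℓ(s) ds. Suppose a(r) > 0 for every r ∈ (δ, 1/2), and a(r) ≤ λ · ℓ(r)² for almost every r ∈ (δ, 1/2) (with respect to Lebesgue measure). Then a(r) ≥ (r − δ)²/(4λ) for every r ∈ (δ, 1/2). -/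
/-!
On an interval `[c, r]` with `a c > 0`, the parabola `q x = (x - c)² / (4 lam)` stays below `a`:
as long as `q ≤ a` on `[c, t]`, the hypothesis `a ≤ lam ℓ²` forces `ℓ s ≥ (s - c) / (2 lam)` for
almost every `s ∈ (c, t)`, and integrating gives `a t ≥ a c + q t > q t`; by continuity of `a`
the strict inequality persists a little beyond `t`. Letting `c` decrease to `δ` gives the bound.
-/

open MeasureTheory Set Filter Topology

section ContinuousInduction

variable {α β : Type*} [ConditionallyCompleteLinearOrder α] [TopologicalSpace α] [OrderTopology α]
  [DenselyOrdered α] [LinearOrder β] [TopologicalSpace β] [OrderClosedTopology β]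

theorem le_on_Icc_of_le_on_Icc_imp_lt {f g : α → β} {a b : α} (hf : ContinuousOn f (Icc a b))
    (hg : ContinuousOn g (Icc a b)) (ha : f a ≤ g a)
    (hstep : ∀ t ∈ Ico a b, (∀ x ∈ Icc a t, f x ≤ g x) → f t < g t) :
    ∀ x ∈ Icc a b, f x ≤ g x := by
  have hclosed : IsClosed ({x | f x ≤ g x} ∩ Icc a b) := by
    rw [inter_comm]
    exact isClosed_Icc.isClosed_le hf hg
  refine hclosed.Icc_subset_of_forall_mem_nhdsGT_of_Icc_subset ha fun t ht hle => ?_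
  have hlt : ∀ᶠ x in 𝓝[Icc a b] t, f x < g x :=
    (hf t (Ico_subset_Icc_self ht)).eventually_lt (hg t (Ico_subset_Icc_self ht)) (hstep t ht hle)
  have hlt_right : ∀ᶠ x in 𝓝[>] t, f x < g x :=
    nhdsWithin_le_of_mem (Icc_mem_nhdsGT_of_mem ht) hlt
  exact hlt_right.mono fun _ => le_of_lt

end ContinuousInduction

theorem integral_sub_eq_sq_div_two (c t : ℝ) : ∫ s in c..t, (s - c) = (t - c) ^ 2 / 2 := by
  rw [intervalIntegral.integral_comp_sub_right (fun s => s), integral_id]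
  ring

theorem div_le_of_sq_div_le_mul_sq {lam x y : ℝ} (hlam : 0 < lam) (hy : 0 ≤ y)
    (h : x ^ 2 / (4 * lam) ≤ lam * y ^ 2) : x / (2 * lam) ≤ y := by
  rw [div_le_iff₀ (by positivity)] at h ⊢
  nlinarith [sq_nonneg (x - 2 * lam * y), mul_nonneg hlam.le hy]

theorem sq_sub_div_le_of_le_mul_sq_ae {ℓ a : ℝ → ℝ} {lam c r : ℝ} (hlam : 0 < lam) (hcr : c ≤ r)
    (hℓ : ∀ᵐ s ∂volume.restrict (Ioo c r), 0 ≤ ℓ s) (hint : IntervalIntegrable ℓ volume c r)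
    (ha : ∀ x ∈ Icc c r, a x = a c + ∫ s in c..x, ℓ s) (hac : 0 < a c)
    (hae : ∀ᵐ s ∂volume.restrict (Ioo c r), a s ≤ lam * ℓ s ^ 2) :
    (r - c) ^ 2 / (4 * lam) ≤ a r := by
  have hcont : ContinuousOn a (Icc c r) := by
    have hprim := intervalIntegral.continuousOn_primitive_interval' hint left_mem_uIcc
    rw [uIcc_of_le hcr] at hprim
    exact (continuousOn_const.add hprim).congr ha
  refine le_on_Icc_of_le_on_Icc_imp_lt (f := fun x => (x - c) ^ 2 / (4 * lam)) (by fun_prop)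
    hcont (by simpa using hac.le) (fun t ht hle => ?_) r (right_mem_Icc.2 hcr)
  have hsub : Ioo c t ⊆ Ioo c r := Ioo_subset_Ioo_right ht.2.le
  have hbound : ∀ᵐ s ∂volume.restrict (Icc c t), (s - c) / (2 * lam) ≤ ℓ s := by
    rw [Measure.restrict_congr_set Ioo_ae_eq_Icc.symm]
    filter_upwards [ae_restrict_mem measurableSet_Ioo, ae_restrict_of_ae_restrict_of_subset hsub hℓ,
      ae_restrict_of_ae_restrict_of_subset hsub hae] with s hs hℓs has
    exact div_le_of_sq_div_le_mul_sq hlam hℓs ((hle s (Ioo_subset_Icc_self hs)).trans has)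
  calc (t - c) ^ 2 / (4 * lam) = ∫ s in c..t, (s - c) / (2 * lam) := by
        rw [intervalIntegral.integral_div, integral_sub_eq_sq_div_two]
        ring
    _ ≤ ∫ s in c..t, ℓ s := by
        have hlin : Continuous fun s => (s - c) / (2 * lam) := by fun_prop
        exact intervalIntegral.integral_mono_ae_restrict ht.1 (hlin.intervalIntegrable c t)
          (hint.mono_set (uIcc_subset_uIcc_left (Icc_subset_uIcc (Ico_subset_Icc_self ht)))) hbound
    _ < a c + ∫ s in c..t, ℓ s := lt_add_of_pos_left _ hac
    _ = a t := (ha t (Ico_subset_Icc_self ht)).symm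

theorem ball_growth_coarea_inequality_general (lam δ : ℝ) (hlam : 0 < lam)
    (hδ0 : 0 < δ) (ℓ : ℝ → ℝ) (hℓ : ∀ s, 0 ≤ ℓ s)
    (hint : IntegrableOn ℓ (Set.Icc 0 (1 / 2)))
    (a : ℝ → ℝ) (ha : ∀ r, a r = ∫ s in (0 : ℝ)..r, ℓ s)
    (hpos : ∀ r ∈ Set.Ioo δ (1 / 2), 0 < a r)
    (hae : ∀ᵐ r ∂(volume.restrict (Set.Ioo δ (1 / 2))), a r ≤ lam * (ℓ r) ^ 2) :
    ∀ r ∈ Set.Ioo δ (1 / 2), (r - δ) ^ 2 / (4 * lam) ≤ a r := by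
  rintro r ⟨hδr, hr⟩
  have hℓint : ∀ u ∈ Icc (0 : ℝ) (1 / 2), ∀ v ∈ Icc (0 : ℝ) (1 / 2),
      IntervalIntegrable ℓ volume u v :=
    fun u hu v hv => (hint.mono_set (uIcc_subset_Icc hu hv)).intervalIntegrable
  have hbound : ∀ c ∈ Ioo δ r, (r - c) ^ 2 / (4 * lam) ≤ a r := by
    rintro c ⟨hδc, hcr⟩
    have hc : c ∈ Icc (0 : ℝ) (1 / 2) := ⟨by linarith, by linarith⟩
    refine sq_sub_div_le_of_le_mul_sq_ae hlam hcr.le (ae_of_all _ hℓ)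
      (hℓint c hc r ⟨by linarith, hr.le⟩) (fun x hx => ?_) (hpos c ⟨hδc, hcr.trans hr⟩)
      (ae_restrict_of_ae_restrict_of_subset (Ioo_subset_Ioo hδc.le hr.le) hae)
    rw [ha, ha, intervalIntegral.integral_add_adjacent_intervals
      (hℓint 0 ⟨le_rfl, by norm_num⟩ c hc) (hℓint c hc x ⟨by linarith [hx.1], by linarith [hx.2]⟩)]
  have hδ_mem : δ ∈ closure (Ioo δ r) := by
    rw [closure_Ioo hδr.ne]
    exact left_mem_Icc.2 hδr.le
  exact ContinuousWithinAt.closure_le hδ_mem (by fun_prop) continuousWithinAt_const hbound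

/-- Let `lam > 0` and `0 < δ < 1/2` be real numbers.  Let `ℓ : ℝ → ℝ` be a nonnegative
function, integrable on `[0, 1/2]`, and set `a r = ∫₀^r ℓ(s) ds`.  Suppose `a r > 0` for
every `r ∈ (δ, 1/2)`, and `a r ≤ lam * ℓ(r)²` for almost every `r ∈ (δ, 1/2)`.  Then
`a r ≥ (r − δ)² / (4 lam)` for every `r ∈ (δ, 1/2)`. -/
theorem ball_growth_coarea_inequality (lam δ : ℝ) (hlam : 0 < lam)
    (hδ0 : 0 < δ) (hδ : δ < 1 / 2) (ℓ : ℝ → ℝ) (hℓ : ∀ s, 0 ≤ ℓ s)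
    (hint : IntegrableOn ℓ (Set.Icc 0 (1 / 2)))
    (a : ℝ → ℝ) (ha : ∀ r, a r = ∫ s in (0 : ℝ)..r, ℓ s)
    (hpos : ∀ r ∈ Set.Ioo δ (1 / 2), 0 < a r)
    (hae : ∀ᵐ r ∂(volume.restrict (Set.Ioo δ (1 / 2))), a r ≤ lam * (ℓ r) ^ 2) :
    ∀ r ∈ Set.Ioo δ (1 / 2), (r - δ) ^ 2 / (4 * lam) ≤ a r :=
  ball_growth_coarea_inequality_general lam δ hlam hδ0 ℓ hℓ hint a ha hpos hae
end

section
/- Let λ > 0 be a real number. Let ℓ : ℝ → ℝ be a nonnegative function, integrable on [0, 1/2], and define a(r) = ∫₀^r ℓ(s) ds. Suppose a(r) > 0 for every r ∈ (0, 1/2), and a(r) ≤ λ · ℓ(r)² for almost every r ∈ (0, 1/2) (with respect to Lebesgue measure). Then ∫₀^{1/2} ℓ(s) ds ≥ 1/(16λ). -/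
/-!
Write `a r = ∫₀^r ℓ` and `g = √a`. The hypothesis says `g ≤ √λ · ℓ = √λ · a'` almost everywhere,
so formally `g' = a' / (2g) ≥ 1 / (2√λ)`, whence `g (1/2) ≥ g t + (1/2 - t) / (2√λ)` for `t > 0`, and
letting `t → 0` gives `a (1/2) ≥ 1 / (16λ)`.

To avoid differentiating `a`, we only use the integrated inequality
`√λ a(v) + (w - v) g(v) ≤ √λ a(w)`: completing the square shows that over steps shorter than a
length controlled by `g t > 0`, `g` increases at any rate `c < 1 / (2√λ)`, and chaining equally
spaced steps gives `g b ≥ g t + c (b - t)`.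
-/

open MeasureTheory Set Filter Topology

theorem add_mul_le_of_sq_growth {μ c h x y : ℝ} (hμ : 0 < μ) (hh : 0 ≤ h) (hy : 0 ≤ y)
    (hgrowth : μ * x ^ 2 + h * x ≤ μ * y ^ 2) (hstep : μ * c ^ 2 * h ≤ x * (1 - 2 * c * μ)) :
    x + c * h ≤ y := by
  have : μ * (x + c * h) ^ 2 ≤ μ * y ^ 2 := by nlinarith
  exact le_of_sq_le_sq (le_of_mul_le_mul_left this hμ) hy

theorem add_mul_sub_le_of_forall_sub_le {g : ℝ → ℝ} {c δ t b : ℝ} (hδ : 0 < δ) (htb : t ≤ b)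
    (hloc : ∀ v w, t ≤ v → v ≤ w → w ≤ b → w - v ≤ δ → g v + c * (w - v) ≤ g w) :
    g t + c * (b - t) ≤ g b := by
  obtain ⟨n, hn⟩ := exists_nat_gt ((b - t) / δ)
  have hn0 : (0 : ℝ) < n := (div_nonneg (sub_nonneg.2 htb) hδ.le).trans_lt hn
  set h := (b - t) / n
  have hh : 0 ≤ h := div_nonneg (sub_nonneg.2 htb) hn0.le
  have hhδ : h ≤ δ := by
    rw [div_lt_iff₀ hδ] at hn
    exact (div_le_iff₀ hn0).2 (by linarith)
  have hnh : n * h = b - t := mul_div_cancel₀ _ hn0.ne'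
  have key : ∀ k ≤ n, g t + c * (k * h) ≤ g (t + k * h) := by
    intro k hk
    induction k with
    | zero => simp
    | succ k ih =>
      have hk' : ((k + 1 : ℕ) : ℝ) ≤ n := by exact_mod_cast hk
      push_cast at hk' ⊢
      have hstep := hloc (t + k * h) (t + (k + 1) * h) (by nlinarith [k.cast_nonneg (α := ℝ)])
        (by nlinarith) (by nlinarith) (by nlinarith)
      have hprev := ih (by omega)
      nlinarith
  simpa [hnh] using key n le_rfl

section Primitive

variable {ℓ : ℝ → ℝ} {μ b : ℝ}

theorem MeasureTheory.IntegrableOn.intervalIntegrable_of_Icc_subset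
    (hint : IntegrableOn ℓ (Icc 0 b)) {u v : ℝ} (hu : 0 ≤ u) (huv : u ≤ v) (hv : v ≤ b) :
    IntervalIntegrable ℓ volume u v :=
  (intervalIntegrable_iff_integrableOn_Icc_of_le huv).2 (hint.mono_set (Icc_subset_Icc hu hv))

theorem mul_integral_add_le_of_sqrt_integral_le (hℓ : ∀ s, 0 ≤ ℓ s)
    (hint : IntegrableOn ℓ (Icc 0 b))
    (hae : ∀ᵐ r ∂volume.restrict (Ioo 0 b), √(∫ s in 0..r, ℓ s) ≤ μ * ℓ r)
    {v w : ℝ} (hv : 0 ≤ v) (hvw : v ≤ w) (hw : w ≤ b) :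
    μ * (∫ s in 0..v, ℓ s) + (w - v) * √(∫ s in 0..v, ℓ s) ≤ μ * ∫ s in 0..w, ℓ s := by
  have hvw_int := hint.intervalIntegrable_of_Icc_subset hv hvw hw
  have hsub : (∫ s in 0..w, ℓ s) - ∫ s in 0..v, ℓ s = ∫ s in v..w, ℓ s :=
    intervalIntegral.integral_interval_sub_left
      (hint.intervalIntegrable_of_Icc_subset le_rfl (hv.trans hvw) hw)
      (hint.intervalIntegrable_of_Icc_subset le_rfl hv (hvw.trans hw))
  have hlow : (fun _ ↦ √(∫ s in 0..v, ℓ s)) ≤ᵐ[volume.restrict (Icc v w)] fun s ↦ μ * ℓ s := by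
    have hae_vw : ∀ᵐ r ∂volume.restrict (Icc v w), √(∫ s in 0..r, ℓ s) ≤ μ * ℓ r := by
      rw [← Measure.restrict_congr_set Ioo_ae_eq_Icc]
      exact ae_restrict_of_ae_restrict_of_subset (Ioo_subset_Ioo hv hw) hae
    filter_upwards [hae_vw, ae_restrict_mem measurableSet_Icc] with s hs hmem
    refine le_trans (Real.sqrt_le_sqrt ?_) hs
    exact intervalIntegral.integral_mono_interval le_rfl hv hmem.1
      (ae_of_all _ hℓ) (hint.intervalIntegrable_of_Icc_subset le_rfl (hv.trans hmem.1)
        (hmem.2.trans hw))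
  have := intervalIntegral.integral_mono_ae_restrict hvw intervalIntegrable_const
    (hvw_int.const_mul μ) hlow
  rw [intervalIntegral.integral_const, intervalIntegral.integral_const_mul, smul_eq_mul] at this
  linear_combination this - μ * hsub

theorem sqrt_integral_add_mul_le (hμ : 0 < μ) (hℓ : ∀ s, 0 ≤ ℓ s)
    (hint : IntegrableOn ℓ (Icc 0 b)) (hpos : ∀ r ∈ Ioo 0 b, 0 < ∫ s in 0..r, ℓ s)
    (hae : ∀ᵐ r ∂volume.restrict (Ioo 0 b), √(∫ s in 0..r, ℓ s) ≤ μ * ℓ r)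
    {c t : ℝ} (ht : t ∈ Ioo 0 b) (hc : 0 < c) (hcμ : 2 * c * μ < 1) :
    √(∫ s in 0..t, ℓ s) + c * (b - t) ≤ √(∫ s in 0..b, ℓ s) := by
  have hF_nonneg : ∀ r, 0 ≤ r → 0 ≤ ∫ s in 0..r, ℓ s := fun r hr ↦
    intervalIntegral.integral_nonneg hr fun s _ ↦ hℓ s
  set δ := √(∫ s in 0..t, ℓ s) * (1 - 2 * c * μ) / (μ * c ^ 2)
  have hδ : 0 < δ := by
    have := Real.sqrt_pos.2 (hpos t ht)
    have : 0 < 1 - 2 * c * μ := by linarith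
    positivity
  refine add_mul_sub_le_of_forall_sub_le (g := fun r ↦ √(∫ s in 0..r, ℓ s)) hδ ht.2.le
    fun v w htv hvw hwb hwv ↦ ?_
  have hv : 0 ≤ v := ht.1.le.trans htv
  refine add_mul_le_of_sq_growth hμ (sub_nonneg.2 hvw) (Real.sqrt_nonneg _) ?_ ?_
  · rw [Real.sq_sqrt (hF_nonneg v hv), Real.sq_sqrt (hF_nonneg w (hv.trans hvw))]
    exact mul_integral_add_le_of_sqrt_integral_le hℓ hint hae hv hvw hwb
  · have hmono : √(∫ s in 0..t, ℓ s) ≤ √(∫ s in 0..v, ℓ s) :=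
      Real.sqrt_le_sqrt <| intervalIntegral.integral_mono_interval le_rfl ht.1.le htv
        (ae_of_all _ hℓ) (hint.intervalIntegrable_of_Icc_subset le_rfl hv (hvw.trans hwb))
    calc μ * c ^ 2 * (w - v) ≤ μ * c ^ 2 * δ := by gcongr
      _ = √(∫ s in 0..t, ℓ s) * (1 - 2 * c * μ) := by
        simp only [δ]; field_simp
      _ ≤ √(∫ s in 0..v, ℓ s) * (1 - 2 * c * μ) := by gcongr

theorem div_two_mul_le_sqrt_integral (hμ : 0 < μ) (hb : 0 < b) (hℓ : ∀ s, 0 ≤ ℓ s)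
    (hint : IntegrableOn ℓ (Icc 0 b)) (hpos : ∀ r ∈ Ioo 0 b, 0 < ∫ s in 0..r, ℓ s)
    (hae : ∀ᵐ r ∂volume.restrict (Ioo 0 b), √(∫ s in 0..r, ℓ s) ≤ μ * ℓ r) :
    b / (2 * μ) ≤ √(∫ s in 0..b, ℓ s) := by
  have hK : 0 < 1 / (2 * μ) := by positivity
  have hlim : Tendsto (fun ε ↦ (1 / (2 * μ) - ε) * (b - ε)) (𝓝[>] 0) (𝓝 (b / (2 * μ))) :=
    tendsto_nhdsWithin_of_tendsto_nhds <|
      (by fun_prop : Continuous fun ε : ℝ ↦ (1 / (2 * μ) - ε) * (b - ε)).tendsto' _ _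
        (by rw [sub_zero, sub_zero, one_div, inv_mul_eq_div])
  refine le_of_tendsto hlim ?_
  filter_upwards [Ioo_mem_nhdsGT (lt_min hb hK)] with ε ⟨hε0, hεmin⟩
  have hεb := hεmin.trans_le (min_le_left _ _)
  have hεK := hεmin.trans_le (min_le_right _ _)
  have hrate : 2 * (1 / (2 * μ) - ε) * μ < 1 := by
    field_simp
    nlinarith
  have := sqrt_integral_add_mul_le hμ hℓ hint hpos hae ⟨hε0, hεb⟩ (sub_pos.2 hεK) hrate
  linarith [Real.sqrt_nonneg (∫ s in 0..ε, ℓ s)]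

end Primitive

/-- Let `lam > 0` be a real number.  Let `ℓ : ℝ → ℝ` be a nonnegative function, integrable
on `[0, 1/2]`, and set `a r = ∫₀^r ℓ(s) ds`.  Suppose `a r > 0` for every `r ∈ (0, 1/2)`,
and `a r ≤ lam * ℓ(r)²` for almost every `r ∈ (0, 1/2)`.  Then
`∫₀^{1/2} ℓ(s) ds ≥ 1 / (16 lam)`. -/
theorem total_area_lower_bound (lam : ℝ) (hlam : 0 < lam)
    (ℓ : ℝ → ℝ) (hℓ : ∀ s, 0 ≤ ℓ s)
    (hint : IntegrableOn ℓ (Set.Icc 0 (1 / 2)))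
    (a : ℝ → ℝ) (ha : ∀ r, a r = ∫ s in (0 : ℝ)..r, ℓ s)
    (hpos : ∀ r ∈ Set.Ioo (0 : ℝ) (1 / 2), 0 < a r)
    (hae : ∀ᵐ r ∂(volume.restrict (Set.Ioo (0 : ℝ) (1 / 2))), a r ≤ lam * (ℓ r) ^ 2) :
    1 / (16 * lam) ≤ ∫ s in (0 : ℝ)..(1 / 2 : ℝ), ℓ s := by
  simp only [ha] at hpos hae
  have hae_sqrt : ∀ᵐ r ∂volume.restrict (Ioo (0 : ℝ) (1 / 2)),
      √(∫ s in 0..r, ℓ s) ≤ √lam * ℓ r := hae.mono fun r hr ↦ by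
    rw [← Real.sqrt_sq (hℓ r), ← Real.sqrt_mul hlam.le]
    exact Real.sqrt_le_sqrt hr
  have hsqrt := div_two_mul_le_sqrt_integral (Real.sqrt_pos.2 hlam) (by norm_num) hℓ hint hpos
    hae_sqrt
  calc 1 / (16 * lam) = (1 / 2 / (2 * √lam)) ^ 2 := by
        rw [div_pow, mul_pow, Real.sq_sqrt hlam.le]; ring
    _ ≤ √(∫ s in (0 : ℝ)..(1 / 2 : ℝ), ℓ s) ^ 2 := by gcongr
    _ = ∫ s in (0 : ℝ)..(1 / 2 : ℝ), ℓ s :=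
        Real.sq_sqrt (intervalIntegral.integral_nonneg (by norm_num) fun s _ ↦ hℓ s)
end

section
/- Let X be a metric space such that for all y, z ∈ X and every ε > 0 there exists a continuous path from y to z of length less than dist(y, z) + ε. Let x ∈ X, let G be a group, and let φ : π₁(X, x) → G be a group homomorphism. Define sys(X, φ, x) ∈ [0, ∞] as the infimum of the lengths of all rectifiable loops based at x whose path-homotopy class has nontrivial image under φ. If r > 0 satisfies 2r < sys(X, φ, x), then every rectifiable loop based at x whose image is contained in the open ball B(x, r) has trivial image under φ. -/
open CategoryTheory

attribute [local instance] Path.Homotopic.setoid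

/-- The length of a path in a metric space: the total variation of the map on `[0,1]`. -/
noncomputable def pathLength {X : Type*} [MetricSpace X] {y z : X} (σ : Path y z) : ENNReal :=
  eVariationOn σ.extend (Set.Icc 0 1)

/-- The element of the fundamental group `π₁(X, x)` determined by a loop based at `x`. -/
noncomputable def loopClass {X : Type*} [TopologicalSpace X] {x : X} (γ : Path x x) :
    FundamentalGroup X x :=
  FundamentalGroup.fromPath (⟦γ⟧ : Path.Homotopic.Quotient x x)

/-- The `φ`-relative systole of `X` at `x`: the infimum of lengths of rectifiable loops
based at `x` whose path-homotopy class has nontrivial image under `φ`. -/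
noncomputable def relSystole {X : Type*} [MetricSpace X] (x : X) {G : Type*} [Group G]
    (φ : FundamentalGroup X x →* G) : ENNReal :=
  ⨅ (γ : Path x x) (_ : pathLength γ ≠ ⊤ ∧ φ (loopClass γ) ≠ 1), pathLength γ

/-!
Cut a loop `γ` of finite length `L` in `B(x, r)` at the point `γ t` that halves its length, and
join `x` to `γ t` by a path `η` of length `< r`. Then `γ ≃ (γ|[0,t] · η⁻¹) · (η · γ|[t,1])` is a
product of two loops in `B(x, r)` of length `< L / 2 + r`. If `L < 2r + 2ⁿε`, after `n` such
halvings all the pieces have length `< 2r + ε`; for `ε = sys(X, φ, x) - 2r` they are shorter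
than the systole, hence `φ`-trivial, and so is `γ`.
-/

section

open Set
open scoped unitInterval
open scoped ENNReal

section Variation

variable {E : Type*} [PseudoMetricSpace E]

theorem continuousOn_variationOnFromTo {f : ℝ → E} {s : Set ℝ} {a : ℝ} (ha : a ∈ s)
    (hf : ContinuousOn f s) (hbv : LocallyBoundedVariationOn f s) :
    ContinuousOn (variationOnFromTo f s a) s := by
  intro t ht
  have hleft : ContinuousWithinAt (variationOnFromTo f s a) (s ∩ Iio t) t := by
    simpa [ContinuousWithinAt] using
      variationOnFromTo.tendsto_left ha ht hbv ((hf t ht).mono inter_subset_left)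
  have hright : ContinuousWithinAt (variationOnFromTo f s a) (s ∩ Ioi t) t := by
    simpa [ContinuousWithinAt] using
      variationOnFromTo.tendsto_right ha ht hbv ((hf t ht).mono inter_subset_left)
  have hs : s ⊆ insert t (s ∩ Iio t ∪ s ∩ Ioi t) := by
    intro u hu
    rcases lt_trichotomy u t with h | h | h <;> simp [*]
  exact ((continuousWithinAt_insert_self.2 (hleft.union hright)).mono hs)

theorem exists_eVariationOn_Icc_eq {f : ℝ → E} {a b : ℝ} (hab : a ≤ b)
    (hf : ContinuousOn f (Icc a b)) (hbv : BoundedVariationOn f (Icc a b))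
    {c : ℝ≥0∞} (hc : c ≤ eVariationOn f (Icc a b)) :
    ∃ t ∈ Icc a b, eVariationOn f (Icc a t) = c := by
  have ha : a ∈ Icc a b := left_mem_Icc.2 hab
  have hcont := continuousOn_variationOnFromTo ha hf hbv.locallyBoundedVariationOn
  have hmem : c.toReal ∈ Icc (variationOnFromTo f (Icc a b) a a)
      (variationOnFromTo f (Icc a b) a b) := by
    rw [variationOnFromTo.self, variationOnFromTo.eq_of_le _ _ hab,
      inter_eq_left.2 Subset.rfl]
    exact ⟨ENNReal.toReal_nonneg, ENNReal.toReal_mono hbv hc⟩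
  obtain ⟨t, ht, hct⟩ := intermediate_value_Icc hab hcont hmem
  have hsub : Icc a t ⊆ Icc a b := Icc_subset_Icc_right ht.2
  refine ⟨t, ht, ?_⟩
  rw [variationOnFromTo.eq_of_le _ _ ht.1, inter_eq_right.2 hsub] at hct
  rwa [← ENNReal.toReal_eq_toReal_iff' (hbv.mono hsub) (ne_top_of_le_ne_top hbv hc)]

end Variation

section PathLength

variable {X : Type*} [MetricSpace X] {x y z : X}

theorem pathLength_symm (γ : Path x y) : pathLength γ.symm = pathLength γ := by
  have hanti : AntitoneOn (fun s : ℝ => 1 - s) (Icc 0 1) := fun _ _ _ _ h => by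
    simp only; linarith
  rw [pathLength, Path.extend_symm, ← Function.comp_def,
    eVariationOn.comp_eq_of_antitoneOn _ _ hanti, image_const_sub_Icc, sub_zero, sub_self,
    pathLength]

theorem pathLength_trans_le (γ : Path x y) (γ' : Path y z) :
    pathLength (γ.trans γ') ≤ pathLength γ + pathLength γ' := by
  have hsplit := eVariationOn.Icc_add_Icc (γ.trans γ').extend (s := univ)
    (by norm_num : (0 : ℝ) ≤ 1 / 2) (by norm_num : (1 : ℝ) / 2 ≤ 1) trivial
  simp only [univ_inter] at hsplit
  rw [pathLength, ← hsplit]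
  gcongr
  · rw [eVariationOn.eq_of_eqOn fun t ht => Path.extend_trans_of_le_half γ γ' ht.2]
    exact eVariationOn.comp_le_of_monotoneOn _ (fun t : ℝ => 2 * t)
      (fun _ _ _ _ h => by simp only; linarith)
      (fun t ht => ⟨by linarith [ht.1], by linarith [ht.2]⟩)
  · rw [eVariationOn.eq_of_eqOn fun t ht => Path.extend_trans_of_half_le γ γ' ht.1]
    exact eVariationOn.comp_le_of_monotoneOn _ (fun t : ℝ => 2 * t - 1)
      (fun _ _ _ _ h => by simp only; linarith)
      (fun t ht => ⟨by linarith [ht.1], by linarith [ht.2]⟩)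

theorem edist_le_pathLength (γ : Path x y) (t : I) : edist x (γ t) ≤ pathLength γ := by
  simpa [pathLength, Path.extend_extends'] using
    eVariationOn.edist_le γ.extend (left_mem_Icc.2 zero_le_one) t.2

theorem pathLength_subpath_of_le (γ : Path x y) {t₀ t₁ : I} (h : t₀ ≤ t₁) :
    pathLength (γ.subpath t₀ t₁) = eVariationOn γ.extend (Icc (t₀ : ℝ) t₁) := by
  set φ : ℝ → ℝ := fun s => s * (t₁ - t₀) + t₀
  have hd : (0 : ℝ) ≤ t₁ - t₀ := sub_nonneg.2 h
  have heq : EqOn (γ.subpath t₀ t₁).extend (γ.extend ∘ φ) (Icc 0 1) := fun s hs => by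
    have hφ : φ s = Icc.convexComb t₀ t₁ ⟨s, hs⟩ := by
      simp only [φ, Icc.coe_convexComb]; ring
    rw [Path.extend_apply _ hs, Function.comp_apply, hφ, Path.extend_extends']
    rfl
  have hmono : MonotoneOn φ (Icc 0 1) := fun _ _ _ _ h => by
    simp only [φ]; nlinarith
  have himage : φ '' Icc 0 1 = Icc (t₀ : ℝ) t₁ := by
    rw [show φ = (· + (t₀ : ℝ)) ∘ (· * (t₁ - t₀ : ℝ)) from rfl, image_comp,
      image_mul_right_Icc zero_le_one hd, image_add_const_Icc]
    simp
  rw [pathLength, eVariationOn.eq_of_eqOn heq, eVariationOn.comp_eq_of_monotoneOn _ _ hmono,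
    himage]

theorem exists_pathLength_subpath_eq_half (γ : Path x y) (hγ : pathLength γ ≠ ⊤) :
    ∃ t : I, pathLength (γ.subpath 0 t) = pathLength γ / 2 ∧
      pathLength (γ.subpath t 1) = pathLength γ / 2 := by
  obtain ⟨t, ht, hhalf⟩ := exists_eVariationOn_Icc_eq zero_le_one γ.continuous_extend.continuousOn
    hγ ENNReal.half_le_self
  refine ⟨⟨t, ht⟩, ?_, ?_⟩
  · rw [pathLength_subpath_of_le γ unitInterval.nonneg']
    exact hhalf
  · have hsplit := eVariationOn.Icc_add_Icc γ.extend (s := univ) ht.1 ht.2 trivial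
    simp only [univ_inter, hhalf] at hsplit
    rw [pathLength_subpath_of_le γ unitInterval.le_one']
    refine (ENNReal.add_right_inj (ENNReal.div_ne_top hγ two_ne_zero)).1 ?_
    rw [ENNReal.add_halves]
    exact hsplit

end PathLength

section Homotopy

variable {X : Type*} [TopologicalSpace X] {x y z w : X}

theorem Path.Homotopic.trans_symm_trans_trans (p : Path x y) (η : Path z y) (q : Path y w) :
    ((p.trans η.symm).trans (η.trans q)).Homotopic (p.trans q) := by
  rw [← Path.Homotopic.Quotient.eq]
  simp [← Path.Homotopic.Quotient.trans_assoc (Path.Homotopic.Quotient.symm _)]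

theorem Path.Homotopic.subpath_trans_subpath (γ : Path x y) (t : I) :
    (((γ.subpath 0 t).cast γ.source.symm rfl).trans
      ((γ.subpath t 1).cast rfl γ.target.symm)).Homotopic γ := by
  have hγ : (γ.subpath 0 1).cast γ.source.symm γ.target.symm = γ := by ext; simp
  rw [← Path.cast_trans, ← Path.Homotopic.Quotient.eq, Path.Homotopic.Quotient.mk_cast]
  conv_rhs => rw [← hγ, Path.Homotopic.Quotient.mk_cast]
  rw [Path.Homotopic.Quotient.eq.2 ⟨Path.Homotopy.subpathTransSubpath γ 0 t 1⟩]

end Homotopy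

section LoopClass

variable {X : Type*} [TopologicalSpace X] {x : X}

theorem loopClass_trans (p q : Path x x) : loopClass (p.trans q) = loopClass q * loopClass p :=
  rfl

theorem loopClass_eq_of_homotopic {p q : Path x x} (h : p.Homotopic q) :
    loopClass p = loopClass q :=
  congrArg FundamentalGroup.fromPath (Path.Homotopic.Quotient.eq.2 h)

theorem loopClass_eq_mul_of_subpath (γ : Path x x) (t : I) (η : Path x (γ t)) :
    loopClass γ = loopClass (η.trans ((γ.subpath t 1).cast rfl γ.target.symm)) *
      loopClass (((γ.subpath 0 t).cast γ.source.symm rfl).trans η.symm) := by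
  rw [← loopClass_trans]
  exact loopClass_eq_of_homotopic
    ((Path.Homotopic.trans_symm_trans_trans _ η _).trans (.subpath_trans_subpath γ t)).symm

end LoopClass

section Systole

open Metric

variable {X : Type*} [MetricSpace X] {x : X} {G : Type*} [Group G]
  {φ : FundamentalGroup X x →* G}

theorem map_loopClass_eq_one_of_pathLength_lt {γ : Path x x}
    (h : pathLength γ < relSystole x φ) : φ (loopClass γ) = 1 := by
  by_contra hne
  exact (h.trans_le (iInf₂_le γ ⟨h.ne_top, hne⟩)).false

theorem range_subset_ball_of_pathLength_lt {y : X} {r : ℝ} (η : Path x y)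
    (h : pathLength η < ENNReal.ofReal r) : range η ⊆ ball x r := by
  rintro _ ⟨t, rfl⟩
  rw [mem_ball', ← ENNReal.ofReal_lt_ofReal_iff_of_nonneg dist_nonneg, ← edist_dist]
  exact (edist_le_pathLength η t).trans_lt h

theorem map_loopClass_eq_one_of_pathLength_lt_two_pow {r : ℝ}
    (hpaths : ∀ y ∈ ball x r, ∃ η : Path x y, pathLength η < ENNReal.ofReal r)
    {ε : ℝ≥0∞} (hsys : 2 * ENNReal.ofReal r + ε ≤ relSystole x φ) (n : ℕ) {γ : Path x x}
    (hγ : range γ ⊆ ball x r) (hlen : pathLength γ < 2 * ENNReal.ofReal r + 2 ^ n * ε) :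
    φ (loopClass γ) = 1 := by
  induction n generalizing γ with
  | zero =>
    rw [pow_zero, one_mul] at hlen
    exact map_loopClass_eq_one_of_pathLength_lt (hlen.trans_le hsys)
  | succ n ih =>
    set R := ENNReal.ofReal r
    obtain ⟨t, hfirst, hsecond⟩ := exists_pathLength_subpath_eq_half γ hlen.ne_top
    obtain ⟨η, hη⟩ := hpaths (γ t) (hγ (mem_range_self t))
    have hηball := range_subset_ball_of_pathLength_lt η hη
    have hsub : ∀ t₀ t₁, range (γ.subpath t₀ t₁) ⊆ ball x r := fun t₀ t₁ => by
      rw [Path.range_subpath]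
      exact (image_subset_range _ _).trans hγ
    have hhalf : pathLength γ / 2 < R + 2 ^ n * ε :=
      ENNReal.div_lt_of_lt_mul (by convert hlen using 1; ring)
    rw [loopClass_eq_mul_of_subpath γ t η, map_mul]
    refine (congrArg₂ _ (ih ?_ ?_) (ih ?_ ?_)).trans (one_mul 1)
    · rw [Path.trans_range, Path.cast_coe]
      exact union_subset hηball (hsub _ _)
    · calc _ ≤ pathLength η + pathLength (γ.subpath t 1) := pathLength_trans_le _ _
        _ < R + (R + 2 ^ n * ε) := by rw [hsecond]; gcongr
        _ = _ := by ring
    · rw [Path.trans_range, Path.cast_coe, Path.symm_range]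
      exact union_subset (hsub _ _) hηball
    · calc _ ≤ pathLength (γ.subpath 0 t) + pathLength η.symm := pathLength_trans_le _ _
        _ < (R + 2 ^ n * ε) + R := by rw [hfirst, pathLength_symm]; gcongr
        _ = _ := by ring

end Systole

end

theorem loops_in_small_ball_are_phi_trivial_general {X : Type*} [MetricSpace X]
    (hconn : ∀ y z : X, ∀ ε : ℝ, 0 < ε →
      ∃ σ : Path y z, pathLength σ < ENNReal.ofReal (dist y z + ε))
    (x : X) {G : Type*} [Group G] (φ : FundamentalGroup X x →* G)
    (r : ℝ) (hsys : ENNReal.ofReal (2 * r) < relSystole x φ)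
    (γ : Path x x) (hrect : pathLength γ ≠ ⊤)
    (him : Set.range ⇑γ ⊆ Metric.ball x r) :
    φ (loopClass γ) = 1 := by
  have hpaths : ∀ y ∈ Metric.ball x r, ∃ η : Path x y, pathLength η < ENNReal.ofReal r := by
    intro y hy
    simpa using hconn x y (r - dist x y) (sub_pos.2 (Metric.mem_ball'.1 hy))
  have h2r : ENNReal.ofReal (2 * r) = 2 * ENNReal.ofReal r := by
    rw [ENNReal.ofReal_mul zero_le_two, ENNReal.ofReal_ofNat]
  set ε := relSystole x φ - ENNReal.ofReal (2 * r)
  have hε : ε ≠ 0 := (tsub_pos_of_lt hsys).ne'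
  have hεsys : 2 * ENNReal.ofReal r + ε ≤ relSystole x φ := by
    rw [← h2r, add_tsub_cancel_of_le hsys.le]
  obtain ⟨n, hn⟩ := ENNReal.exists_nat_mul_gt hε hrect
  refine map_loopClass_eq_one_of_pathLength_lt_two_pow hpaths hεsys n him ?_
  calc pathLength γ < n * ε := hn
    _ ≤ 2 ^ n * ε := by gcongr; exact_mod_cast Nat.lt_two_pow_self.le
    _ ≤ 2 * ENNReal.ofReal r + 2 ^ n * ε := le_add_self

/-- If `2r` is less than the `φ`-relative systole of `X` at `x`, then every rectifiable
loop based at `x` contained in the open ball `B(x, r)` has trivial image under `φ`.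
(`X` is assumed to be such that any two points can be joined by paths of length
arbitrarily close to their distance.) -/
theorem loops_in_small_ball_are_phi_trivial {X : Type*} [MetricSpace X]
    (hconn : ∀ y z : X, ∀ ε : ℝ, 0 < ε →
      ∃ σ : Path y z, pathLength σ < ENNReal.ofReal (dist y z + ε))
    (x : X) {G : Type*} [Group G] (φ : FundamentalGroup X x →* G)
    (r : ℝ) (hr : 0 < r) (hsys : ENNReal.ofReal (2 * r) < relSystole x φ)
    (γ : Path x x) (hrect : pathLength γ ≠ ⊤)
    (him : Set.range ⇑γ ⊆ Metric.ball x r) :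
    φ (loopClass γ) = 1 :=
  loops_in_small_ball_are_phi_trivial_general hconn x φ r hsys γ hrect him
end
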